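/- (Atomicity, order-theoretic core.) Let Op be a finite type of operations, T a linearly ordered type of timestamps, ts : Op → T the timestamp of each operation, W : Op → Prop a (decidable) predicate marking the write operations, and prec a strict partial order on Op (irreflexive and transitive, the real-time precedence of the history). Assume: (h1) whenever prec o o', then ts o ≤ ts o'; (h2) whenever prec o o' and o' is a write, then ts o < ts o'; (h3) distinct writes have distinct timestamps. Then there exists a strict linear order lt on Op such that: (c1) prec o o' implies lt o o'; (c2) ts o < ts o' implies lt o o'; (c3) if ts o = ts o', o is a write and o' is not a write, then lt o o'. Consequently, (c4) for every non-write operation r (a read) such that some write w satisfies ts w = ts r, w precedes r in lt and no write lies strictly between w and r in lt; i.e., every read returns the value of the latest preceding write in the constructed sequential order, which also preserves the real-time order. -/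

import Mathlib

/-!
Order operations by timestamp, and within one timestamp put the writes before the reads.
By (h1) and (h2) this key never decreases along real-time precedence, so "smaller key, or
precedes in real time" is a strict partial order; any linear extension of it (Szpilrajn)
satisfies (c1)–(c3). For (c4), anything placed between a write `w` and a read `r` of the
same timestamp must carry that timestamp too, so by (h3) it cannot be another write.
-/

theorem exists_isStrictTotalOrder_le {α : Type*} (r : α → α → Prop) [IsStrictOrder α r] :
    ∃ s : α → α → Prop, IsStrictTotalOrder α s ∧ r ≤ s := by
  let := partialOrderOfSO r
  refine ⟨fun a b => toLinearExtension a < toLinearExtension b,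
    inferInstanceAs (IsStrictTotalOrder (LinearExtension α) (· < ·)), fun a b hab => ?_⟩
  exact toLinearExtension.monotone.strictMono_of_injective (fun _ _ h => h) (show a < b from hab)

theorem isStrictOrder_invImage_lt_or {α β : Type*} [Preorder β] (f : α → β)
    (r : α → α → Prop) [IsStrictOrder α r] (hf : ∀ a b, r a b → f a ≤ f b) :
    IsStrictOrder α (fun a b => f a < f b ∨ r a b) where
  irrefl a h := h.elim (lt_irrefl _) (irrefl a)
  trans a b c := by
    rintro (hab | hab) (hbc | hbc)
    · exact .inl (hab.trans hbc)
    · exact .inl (hab.trans_le (hf b c hbc))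
    · exact .inl ((hf a b hab).trans_lt hbc)
    · exact .inr (_root_.trans hab hbc)

section Timestamps

variable {Op T : Type*} [LinearOrder T] (ts : Op → T) (W : Op → Prop)

/-- As `False < True` in `Prop`, writes come before reads of the same timestamp. -/
def timestampKey (o : Op) : T ×ₗ Prop :=
  toLex (ts o, ¬ W o)

variable {ts W}

theorem timestampKey_lt_of_ts_lt {o o' : Op} (h : ts o < ts o') :
    timestampKey ts W o < timestampKey ts W o' :=
  Prod.Lex.toLex_lt_toLex.mpr (.inl h)

theorem timestampKey_lt_of_write {o o' : Op} (h : ts o = ts o') (hw : W o) (hr : ¬ W o') :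
    timestampKey ts W o < timestampKey ts W o' :=
  Prod.Lex.toLex_lt_toLex.mpr (.inr ⟨h, lt_of_le_not_ge (fun hnw => (hnw hw).elim) (· hr hw)⟩)

theorem timestampKey_le_of_prec {prec : Op → Op → Prop}
    (h1 : ∀ o o', prec o o' → ts o ≤ ts o') (h2 : ∀ o o', prec o o' → W o' → ts o < ts o')
    {o o' : Op} (h : prec o o') : timestampKey ts W o ≤ timestampKey ts W o' := by
  rcases (h1 o o' h).lt_or_eq with hlt | heq
  · exact (timestampKey_lt_of_ts_lt hlt).le
  · have hr : ¬ W o' := fun hw => (h2 o o' h hw).ne heq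
    exact Prod.Lex.le_iff.mpr (.inr ⟨heq, fun _ => hr⟩)

theorem ts_eq_of_lt_of_lt {lt : Op → Op → Prop} [Std.Asymm lt]
    (hts : ∀ o o', ts o < ts o' → lt o o') {a b c : Op} (hab : lt a b) (hbc : lt b c)
    (hac : ts a = ts c) : ts b = ts a :=
  le_antisymm (hac ▸ not_lt.mp fun h => asymm hbc (hts c b h))
    (not_lt.mp fun h => asymm hab (hts b a h))

end Timestamps

theorem atomicity_linearization_general {Op T : Type*} [LinearOrder T]
    (ts : Op → T) (W : Op → Prop)
    (prec : Op → Op → Prop)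
    (hirr : ∀ o, ¬ prec o o)
    (htrans : ∀ o₁ o₂ o₃, prec o₁ o₂ → prec o₂ o₃ → prec o₁ o₃)
    (h1 : ∀ o o', prec o o' → ts o ≤ ts o')
    (h2 : ∀ o o', prec o o' → W o' → ts o < ts o')
    (h3 : ∀ o o', W o → W o' → o ≠ o' → ts o ≠ ts o') :
    ∃ lt : Op → Op → Prop, IsStrictTotalOrder Op lt ∧
      (∀ o o', prec o o' → lt o o') ∧
      (∀ o o', ts o < ts o' → lt o o') ∧
      (∀ o o', ts o = ts o' → W o → ¬ W o' → lt o o') ∧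
      (∀ r, ¬ W r → ∀ w, W w → ts w = ts r →
        lt w r ∧ ∀ w', W w' → ¬ (lt w w' ∧ lt w' r)) := by
  have : IsStrictOrder Op prec := { irrefl := hirr, trans := htrans }
  have := isStrictOrder_invImage_lt_or (timestampKey ts W) prec
    fun _ _ => timestampKey_le_of_prec h1 h2
  obtain ⟨lt, hlt, hle⟩ := exists_isStrictTotalOrder_le
    (fun o o' => timestampKey ts W o < timestampKey ts W o' ∨ prec o o')
  have hc2 : ∀ o o', ts o < ts o' → lt o o' :=
    fun o o' h => hle o o' (.inl (timestampKey_lt_of_ts_lt h))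
  have hc3 : ∀ o o', ts o = ts o' → W o → ¬ W o' → lt o o' :=
    fun o o' h hw hr => hle o o' (.inl (timestampKey_lt_of_write h hw hr))
  refine ⟨lt, hlt, fun o o' h => hle o o' (.inr h), hc2, hc3,
    fun r hr w hw hts => ⟨hc3 w r hts hw hr, ?_⟩⟩
  rintro w' hw' ⟨hww', hw'r⟩
  exact h3 w' w hw' hw (fun h => irrefl w (h ▸ hww')) (ts_eq_of_lt_of_lt hc2 hww' hw'r hts)

/-- **Atomicity, order-theoretic core.** Let `Op` be a finite type of
operations, `T` a linearly ordered type of timestamps, `ts : Op → T`, `W : Op → Prop`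
a decidable predicate marking the writes, and `prec` a strict partial order on `Op`
(the real-time precedence). Assume:
(h1) `prec o o'` implies `ts o ≤ ts o'`;
(h2) `prec o o'` and `W o'` imply `ts o < ts o'`;
(h3) distinct writes have distinct timestamps.
Then there is a strict linear order `lt` on `Op` such that:
(c1) `prec o o'` implies `lt o o'`;
(c2) `ts o < ts o'` implies `lt o o'`;
(c3) if `ts o = ts o'`, `o` is a write and `o'` is not, then `lt o o'`;
and consequently (c4) every non-write (read) `r` whose timestamp equals that of some
write `w` is placed after `w` with no write strictly between `w` and `r`: every read
returns the value of the latest preceding write in the constructed sequential order,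
which also preserves the real-time order. -/
theorem atomicity_linearization {Op T : Type*} [Fintype Op] [LinearOrder T]
    (ts : Op → T) (W : Op → Prop) [DecidablePred W]
    (prec : Op → Op → Prop)
    (hirr : ∀ o, ¬ prec o o)
    (htrans : ∀ o₁ o₂ o₃, prec o₁ o₂ → prec o₂ o₃ → prec o₁ o₃)
    (h1 : ∀ o o', prec o o' → ts o ≤ ts o')
    (h2 : ∀ o o', prec o o' → W o' → ts o < ts o')
    (h3 : ∀ o o', W o → W o' → o ≠ o' → ts o ≠ ts o') :
    ∃ lt : Op → Op → Prop, IsStrictTotalOrder Op lt ∧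
      (∀ o o', prec o o' → lt o o') ∧
      (∀ o o', ts o < ts o' → lt o o') ∧
      (∀ o o', ts o = ts o' → W o → ¬ W o' → lt o o') ∧
      (∀ r, ¬ W r → ∀ w, W w → ts w = ts r →
        lt w r ∧ ∀ w', W w' → ¬ (lt w w' ∧ lt w' r)) :=
  atomicity_linearization_general ts W prec hirr htrans h1 h2 h3
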